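/- Let G be a finitely generated group such that every group homomorphism from G to the additive group (ℝ,+) is trivial, and let ρ be an orientation-preserving action of G on the circle by homeomorphisms that preserves a Borel probability measure μ on S¹ (the pushforward of μ under ρ(g) equals μ for all g ∈ G). Then G has a periodic orbit: there exists a point p ∈ S¹ whose orbit {ρ(g)(p) : g ∈ G} is finite. In particular, there exists a finite-index normal subgroup K of G and a point q ∈ S¹ with ρ(k)(q) = q for all k ∈ K. -/

import Mathlib

open MeasureTheory

/-- The group of self-homeomorphisms of the circle `S¹ = ℝ/ℤ`,
with `f * g = f ∘ g`. -/
noncomputable instance : Group (UnitAddCircle ≃ₜ UnitAddCircle) where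
  mul f g := g.trans f
  one := Homeomorph.refl _
  inv := Homeomorph.symm
  mul_assoc _ _ _ := Homeomorph.ext fun _ => rfl
  one_mul _ := Homeomorph.ext fun _ => rfl
  mul_one _ := Homeomorph.ext fun _ => rfl
  inv_mul_cancel a := Homeomorph.ext a.symm_apply_apply

/-- `F : ℝ → ℝ` is a `C¹` lift of the circle homeomorphism `f`: it is `C¹` with
nowhere-vanishing derivative, commutes with the deck transformation up to sign,
and descends to `f` on `ℝ/ℤ`. -/
def IsC1Lift (f : UnitAddCircle ≃ₜ UnitAddCircle) (F : ℝ → ℝ) : Prop :=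
  ContDiff ℝ 1 F ∧ (∀ x : ℝ, deriv F x ≠ 0) ∧
    ((∀ x : ℝ, F (x + 1) = F x + 1) ∨ (∀ x : ℝ, F (x + 1) = F x - 1)) ∧
    ∀ x : ℝ, f (x : UnitAddCircle) = ((F x : ℝ) : UnitAddCircle)

/-- A `C¹` action of a group `Γ` on the circle: a homomorphism into the
self-homeomorphisms of the circle all of whose values admit `C¹` lifts. -/
def IsC1Action {Γ : Type*} [Group Γ] (ρ : Γ →* (UnitAddCircle ≃ₜ UnitAddCircle)) : Prop :=
  ∀ γ : Γ, ∃ F : ℝ → ℝ, IsC1Lift (ρ γ) F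

/-- `F : ℝ → ℝ` is an orientation-preserving `C¹` lift of the circle
homeomorphism `f`: it is `C¹` with everywhere positive derivative,
satisfies `F (x+1) = F x + 1` and descends to `f` on `ℝ/ℤ`. -/
def IsOPC1Lift (f : UnitAddCircle ≃ₜ UnitAddCircle) (F : ℝ → ℝ) : Prop :=
  ContDiff ℝ 1 F ∧ (∀ x : ℝ, 0 < deriv F x) ∧
    (∀ x : ℝ, F (x + 1) = F x + 1) ∧
    ∀ x : ℝ, f (x : UnitAddCircle) = ((F x : ℝ) : UnitAddCircle)

/-- `F : ℝ → ℝ` is an orientation-preserving (topological) lift of the circle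
homeomorphism `f`: continuous, strictly increasing, satisfies
`F (x+1) = F x + 1`, and descends to `f` on `ℝ/ℤ`. -/
def IsOPLift (f : UnitAddCircle ≃ₜ UnitAddCircle) (F : ℝ → ℝ) : Prop :=
  Continuous F ∧ StrictMono F ∧
    (∀ x : ℝ, F (x + 1) = F x + 1) ∧
    ∀ x : ℝ, f (x : UnitAddCircle) = ((F x : ℝ) : UnitAddCircle)

open Set Function

/-!
Lift `μ` to the `ℤ`-periodic measure `ν` on `ℝ` and let `H x = ∫₀ˣ dν`, so that
`H (x + 1) = H x + 1`. Invariance of `μ` under `f = ρ g` makes `H ∘ F - H` constant for every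
lift `F` of `f`, so `H` descends to a map of the circle semiconjugating the action to rotations,
and `g ↦ H (F_g 0) mod 1` is a homomorphism `G → ℝ/ℤ`. Its image is a finitely generated abelian
group without nontrivial homomorphisms to `ℝ`, hence finite, and its kernel `K` has finite index.
Each `k ∈ K` has a lift `F` with `H ∘ F = H`; as `H` is nonconstant on every neighbourhood of a
lift of a point of `supp μ`, such an `F` fixes these lifts. So `K` fixes `supp μ` pointwise and
the `G`-orbits of its points are finite.
-/

lemma homeomorph_mul_apply (f g : UnitAddCircle ≃ₜ UnitAddCircle) (x : UnitAddCircle) :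
    (f * g) x = f (g x) := rfl

namespace IsOPLift

variable {f : UnitAddCircle ≃ₜ UnitAddCircle} {F : ℝ → ℝ}

lemma map_add_intCast (hF : IsOPLift f F) (x : ℝ) (n : ℤ) : F (x + n) = F x + n := by
  have hper : Periodic (fun x => F x - x) 1 := fun x => by simp only [hF.2.2.1 x]; ring
  have := hper.int_mul n x
  simp only [mul_one] at this
  linarith

lemma sub_intCast (hF : IsOPLift f F) (m : ℤ) : IsOPLift f (fun x => F x - m) := by
  refine ⟨hF.1.sub continuous_const, fun a b hab => sub_lt_sub_right (hF.2.1 hab) _,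
    fun x => by simp only [hF.2.2.1 x]; ring, fun x => ?_⟩
  rw [hF.2.2.2 x]
  exact (by simp : ((F x - m : ℝ) : UnitAddCircle) = F x).symm

lemma apply_zero (hF : IsOPLift f F) : f 0 = F 0 := hF.2.2.2 0

lemma surjective (hF : IsOPLift f F) : Surjective F := by
  intro y
  set m := ⌊y - F 0⌋
  have hlo : F m ≤ y := by
    have := Int.floor_le (y - F 0)
    rw [← zero_add (m : ℝ), hF.map_add_intCast]; linarith
  have hhi : y ≤ F (m + 1) := by
    have := Int.lt_floor_add_one (y - F 0)
    rw [← zero_add ((m : ℝ) + 1), ← Int.cast_one, ← Int.cast_add, hF.map_add_intCast]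
    push_cast; linarith
  obtain ⟨x, -, hx⟩ := intermediate_value_Icc (by linarith : (m : ℝ) ≤ m + 1) hF.1.continuousOn
    (show y ∈ Icc (F m) (F (m + 1)) from ⟨hlo, hhi⟩)
  exact ⟨x, hx⟩

lemma image_Ioc (hF : IsOPLift f F) {a b : ℝ} (hab : a ≤ b) :
    F '' Ioc a b = Ioc (F a) (F b) := by
  refine Subset.antisymm ?_ (intermediate_value_Ioc hab hF.1.continuousOn)
  rintro _ ⟨x, hx, rfl⟩
  exact ⟨hF.2.1 hx.1, hF.2.1.monotone hx.2⟩

end IsOPLift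

namespace UnitAddCircle

lemma coe_eq_coe_iff {x y : ℝ} : (x : UnitAddCircle) = y ↔ ∃ n : ℤ, y = x + n := by
  rw [QuotientAddGroup.eq, AddSubgroup.mem_zmultiples_iff]
  simp only [zsmul_eq_mul, mul_one]
  exact ⟨fun ⟨n, hn⟩ => ⟨n, by linarith⟩, fun ⟨n, hn⟩ => ⟨n, by linarith⟩⟩

variable (μ : Measure UnitAddCircle)

noncomputable def periodicLift : Measure ℝ :=
  Measure.sum fun n : ℤ => μ.map fun q => (AddCircle.equivIoc 1 0 q : ℝ) + n

lemma measurable_equivIoc_add (n : ℝ) :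
    Measurable fun q : UnitAddCircle => (AddCircle.equivIoc 1 0 q : ℝ) + n :=
  (measurable_subtype_coe.comp (AddCircle.measurableEquivIoc 1 0).measurable).add_const n

lemma periodicLift_apply {A : Set ℝ} (hA : MeasurableSet A) :
    periodicLift μ A = ∑' n : ℤ, μ ((fun q => (AddCircle.equivIoc 1 0 q : ℝ) + n) ⁻¹' A) := by
  simp only [periodicLift, Measure.sum_apply _ hA, Measure.map_apply (measurable_equivIoc_add _) hA]

lemma image_coe_eq_iUnion (A : Set ℝ) :
    ((↑) : ℝ → UnitAddCircle) '' A =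
      ⋃ n : ℤ, (fun q => (AddCircle.equivIoc 1 0 q : ℝ) + n) ⁻¹' A := by
  ext q
  simp only [mem_image, mem_iUnion, mem_preimage]
  constructor
  · rintro ⟨x, hx, rfl⟩
    obtain ⟨n, hn⟩ :=
      coe_eq_coe_iff.1 (AddCircle.coe_equivIoc (p := 1) (a := 0) (y := (x : UnitAddCircle)))
    exact ⟨n, by rwa [← hn]⟩
  · rintro ⟨n, hn⟩
    exact ⟨_, hn, by simp [AddCircle.coe_equivIoc]⟩

lemma measure_image_coe_le_periodicLift {A : Set ℝ} (hA : MeasurableSet A) :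
    μ (((↑) : ℝ → UnitAddCircle) '' A) ≤ periodicLift μ A := by
  rw [image_coe_eq_iUnion, periodicLift_apply μ hA]
  exact measure_iUnion_le _

lemma periodicLift_eq_measure_image_coe {A : Set ℝ} (hA : MeasurableSet A) {s : ℝ}
    (hAs : A ⊆ Ioc s (s + 1)) : periodicLift μ A = μ (((↑) : ℝ → UnitAddCircle) '' A) := by
  rw [image_coe_eq_iUnion, periodicLift_apply μ hA,
    measure_iUnion _ fun n : ℤ => measurable_equivIoc_add n hA]
  intro n m hnm
  refine disjoint_left.2 fun q hn hm => hnm ?_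
  obtain ⟨hn₁, hn₂⟩ := hAs hn
  obtain ⟨hm₁, hm₂⟩ := hAs hm
  have h₁ : n - m < 1 := by exact_mod_cast (by push_cast; linarith : ((n - m : ℤ) : ℝ) < 1)
  have h₂ : m - n < 1 := by exact_mod_cast (by push_cast; linarith : ((m - n : ℤ) : ℝ) < 1)
  omega

instance [IsFiniteMeasure μ] : IsLocallyFiniteMeasure (periodicLift μ) :=
  ⟨fun x => ⟨Ioo (x - 1 / 2) (x + 1 / 2), Ioo_mem_nhds (by linarith) (by linarith), by
    rw [periodicLift_eq_measure_image_coe μ measurableSet_Ioo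
      (Ioo_subset_Ioc_self.trans (Ioc_subset_Ioc_right (by linarith)))]
    exact measure_lt_top _ _⟩⟩

lemma periodicLift_Ioc_add_one [IsProbabilityMeasure μ] (a : ℝ) :
    periodicLift μ (Ioc a (a + 1)) = 1 := by
  rw [periodicLift_eq_measure_image_coe μ measurableSet_Ioc le_rfl, AddCircle.coe_image_Ioc_eq,
    measure_univ]

noncomputable def liftCDF (x : ℝ) : ℝ := ∫ _ in 0..x, (1 : ℝ) ∂periodicLift μ

lemma liftCDF_sub [IsFiniteMeasure μ] {a b : ℝ} (hab : a ≤ b) :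
    liftCDF μ b - liftCDF μ a = (periodicLift μ).real (Ioc a b) := by
  rw [liftCDF, liftCDF, intervalIntegral.integral_interval_sub_left intervalIntegrable_const
    intervalIntegrable_const, intervalIntegral.integral_const', Ioc_eq_empty_of_le hab]
  simp

lemma liftCDF_zero : liftCDF μ 0 = 0 := intervalIntegral.integral_same

lemma liftCDF_add_one [IsProbabilityMeasure μ] (x : ℝ) : liftCDF μ (x + 1) = liftCDF μ x + 1 := by
  have := liftCDF_sub μ (by linarith : x ≤ x + 1)
  rw [measureReal_def, periodicLift_Ioc_add_one, ENNReal.toReal_one] at this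
  linarith

lemma liftCDF_add_intCast [IsProbabilityMeasure μ] (x : ℝ) (n : ℤ) :
    liftCDF μ (x + n) = liftCDF μ x + n := by
  have hper : Periodic (fun x => liftCDF μ x - x) 1 := fun x => by
    simp only [liftCDF_add_one]; ring
  have := hper.int_mul n x
  simp only [mul_one] at this
  linarith

noncomputable def circleCDF [IsProbabilityMeasure μ] : UnitAddCircle → UnitAddCircle :=
  Periodic.lift (f := fun x => (liftCDF μ x : UnitAddCircle)) fun x => by
    simp [liftCDF_add_one]

lemma circleCDF_coe [IsProbabilityMeasure μ] (x : ℝ) : circleCDF μ x = liftCDF μ x := rfl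

variable {μ} {f : UnitAddCircle ≃ₜ UnitAddCircle} {F : ℝ → ℝ}

lemma periodicLift_Ioc_map_lift (hF : IsOPLift f F) (hf : μ.map f = μ) {a b : ℝ} (hab : a ≤ b)
    (hba : b ≤ a + 1) : periodicLift μ (Ioc (F a) (F b)) = periodicLift μ (Ioc a b) := by
  have hFba : F b ≤ F a + 1 := hF.2.2.1 a ▸ hF.2.1.monotone hba
  rw [periodicLift_eq_measure_image_coe μ measurableSet_Ioc (Ioc_subset_Ioc_right hFba),
    periodicLift_eq_measure_image_coe μ measurableSet_Ioc (Ioc_subset_Ioc_right hba),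
    ← hF.image_Ioc hab, image_image]
  simp_rw [← hF.2.2.2]
  have hpres : MeasurePreserving f.toMeasurableEquiv μ μ := ⟨f.measurable, hf⟩
  rw [← image_image f, ← hpres.measure_preimage_equiv, f.toMeasurableEquiv_coe, f.preimage_image]

lemma liftCDF_comp_lift [IsProbabilityMeasure μ] (hF : IsOPLift f F) (hf : μ.map f = μ)
    (x : ℝ) : liftCDF μ (F x) = liftCDF μ x + liftCDF μ (F 0) := by
  set D := fun x => liftCDF μ (F x) - liftCDF μ x
  have hper : Periodic D 1 := fun x => by
    simp only [D, hF.2.2.1, liftCDF_add_one]; ring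
  have hloc : ∀ x y, x ≤ y → y ≤ x + 1 → D y = D x := fun x y hxy hyx => by
    have h := liftCDF_sub μ (hF.2.1.monotone hxy)
    rw [measureReal_def, periodicLift_Ioc_map_lift hF hf hxy hyx, ← measureReal_def,
      ← liftCDF_sub μ hxy] at h
    simp only [D]; linarith
  have hx : D x = D 0 := by
    rw [← hper.sub_int_mul_eq ⌊x⌋, mul_one, Int.self_sub_floor]
    exact hloc 0 _ (Int.fract_nonneg x) (by linarith [Int.fract_lt_one x])
  simp only [D, liftCDF_zero] at hx
  linarith

lemma circleCDF_apply [IsProbabilityMeasure μ] (hF : IsOPLift f F) (hf : μ.map f = μ)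
    (z : UnitAddCircle) : circleCDF μ (f z) = circleCDF μ z + circleCDF μ (f 0) := by
  induction z using QuotientAddGroup.induction_on with | H x => ?_
  rw [hF.2.2.2, hF.apply_zero, circleCDF_coe, circleCDF_coe, circleCDF_coe,
    liftCDF_comp_lift hF hf, QuotientAddGroup.mk_add]

lemma coe_notMem_support_of_liftCDF_eq [IsFiniteMeasure μ] {a x b : ℝ} (hax : a < x)
    (hxb : x < b) (hab : liftCDF μ a = liftCDF μ b) : (x : UnitAddCircle) ∉ μ.support := by
  have hnull : periodicLift μ (Ioc a b) = 0 := by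
    have h := liftCDF_sub μ (hax.trans hxb).le
    rwa [hab, sub_self, eq_comm, measureReal_eq_zero_iff measure_Ioc_lt_top.ne] at h
  refine Measure.notMem_support_iff_exists.2 ⟨_, (QuotientAddGroup.isOpenMap_coe _
    isOpen_Ioo).mem_nhds ⟨x, ⟨hax, hxb⟩, rfl⟩, ?_⟩
  exact nonpos_iff_eq_zero.1 ((measure_image_coe_le_periodicLift μ measurableSet_Ioo).trans_eq
    (measure_mono_null Ioo_subset_Ioc_self hnull))

lemma apply_eq_self_of_liftCDF_comp_eq [IsFiniteMeasure μ] (hF : IsOPLift f F)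
    (hH : ∀ x, liftCDF μ (F x) = liftCDF μ x) {q : UnitAddCircle} (hq : q ∈ μ.support) :
    f q = q := by
  obtain ⟨x, rfl⟩ := QuotientAddGroup.mk_surjective q
  rw [hF.2.2.2]
  refine congrArg _ (by_contra fun hne => ?_)
  -- `x` lies strictly between `F x` and `F⁻¹ x`, where `liftCDF μ` takes the same value.
  obtain ⟨y, hy⟩ := hF.surjective x
  have hHy : liftCDF μ y = liftCDF μ (F x) := by rw [← hH y, hy, hH x]
  rcases lt_or_gt_of_ne hne with h | h
  · exact coe_notMem_support_of_liftCDF_eq h (hF.2.1.lt_iff_lt.1 (hy ▸ h)) hHy.symm hq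
  · exact coe_notMem_support_of_liftCDF_eq (hF.2.1.lt_iff_lt.1 (hy ▸ h)) h hHy hq

lemma apply_eq_self_of_circleCDF_eq_zero [IsProbabilityMeasure μ] (hF : IsOPLift f F)
    (hf : μ.map f = μ) (h0 : circleCDF μ (f 0) = 0) {q : UnitAddCircle} (hq : q ∈ μ.support) :
    f q = q := by
  rw [hF.apply_zero, circleCDF_coe, AddCircle.coe_eq_zero_iff] at h0
  obtain ⟨m, hm⟩ := h0
  refine apply_eq_self_of_liftCDF_comp_eq (hF.sub_intCast m) (fun x => ?_) hq
  rw [sub_eq_add_neg, ← Int.cast_neg, liftCDF_add_intCast, liftCDF_comp_lift hF hf, ← hm]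
  simp

end UnitAddCircle

theorem CommGroup.finite_of_forall_monoidHom_real_eq_one {A : Type*} [CommGroup A] [Group.FG A]
    (h : ∀ ψ : A →* Multiplicative ℝ, ψ = 1) : Finite A := by
  obtain ⟨n, ι, _, p, hp, e, ⟨eqv⟩⟩ := AddCommGroup.equiv_free_prod_directSum_zmod (Additive A)
  cases n with
  | zero =>
    have : ∀ i, NeZero (p i ^ e i) := fun i => ⟨pow_ne_zero _ (hp i).ne_zero⟩
    have : Finite (DirectSum ι fun i => ZMod (p i ^ e i)) :=
      Finite.of_equiv _ DFinsupp.equivFunOnFintype.symm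
    exact Finite.of_equiv _ eqv.toEquiv.symm
  | succ n =>
    let ψ : Additive A →+ ℝ := (Int.castAddHom ℝ).comp
      ((Finsupp.applyAddHom 0).comp ((AddMonoidHom.fst _ _).comp eqv.toAddMonoidHom))
    have hψ : ψ (eqv.symm (Finsupp.single 0 1, 0)) = 1 := by simp [ψ]
    have h0 := DFunLike.congr_fun (h (AddMonoidHom.toMultiplicativeRight ψ))
      (eqv.symm (Finsupp.single 0 1, 0)).toMul
    simp [hψ] at h0

lemma MonoidHom.finite_range_of_forall_monoidHom_real_eq_one {G A : Type*} [Group G] [Group.FG G]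
    [CommGroup A] (hG : ∀ ψ : G →* Multiplicative ℝ, ψ = 1) (φ : G →* A) : Finite φ.range :=
  CommGroup.finite_of_forall_monoidHom_real_eq_one fun ψ => by
    ext ⟨_, g, rfl⟩
    exact DFunLike.congr_fun (hG (ψ.comp φ.rangeRestrict)) g

lemma Subgroup.finite_range_of_forall_mul_mem {G X : Type*} [Group G] (K : Subgroup G)
    [K.FiniteIndex] (u : G → X) (hu : ∀ g, ∀ k ∈ K, u (g * k) = u g) : (range u).Finite := by
  refine (finite_range (u ∘ Quotient.out : G ⧸ K → X)).subset ?_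
  rintro _ ⟨g, rfl⟩
  obtain ⟨k, hk⟩ := QuotientGroup.mk_out_eq_mul K g
  exact ⟨g, by simp [hk, hu]⟩

/-- `UnitAddCircle.circleCDF μ` semiconjugates `ρ g` to the rotation by `rotationHom g`. -/
noncomputable def rotationHom {G : Type*} [Group G] (μ : Measure UnitAddCircle)
    [IsProbabilityMeasure μ] (ρ : G →* (UnitAddCircle ≃ₜ UnitAddCircle))
    (hρ : ∀ g, ∃ F, IsOPLift (ρ g) F) (hinv : ∀ g, μ.map (ρ g) = μ) :
    G →* Multiplicative UnitAddCircle :=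
  MonoidHom.mk' (fun g => .ofAdd (UnitAddCircle.circleCDF μ (ρ g 0))) fun g h => by
    obtain ⟨F, hF⟩ := hρ g
    rw [map_mul, homeomorph_mul_apply, UnitAddCircle.circleCDF_apply hF (hinv g), add_comm,
      ofAdd_add]

/-- **Corollary.** A finitely generated group with `H¹(G,ℝ) = 0` (every
homomorphism to `(ℝ,+)` is trivial) acting on the circle by
orientation-preserving homeomorphisms and preserving a Borel probability
measure has a periodic orbit; in particular, a finite-index normal subgroup
acts with a global fixed point. -/
theorem periodic_orbit_of_trivial_cohomology_measure_preserving
    {G : Type*} [Group G] (hfg : Group.FG G)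
    (hcoh : ∀ φ : G →* Multiplicative ℝ, φ = 1)
    (ρ : G →* (UnitAddCircle ≃ₜ UnitAddCircle))
    (hρ : ∀ g : G, ∃ F : ℝ → ℝ, IsOPLift (ρ g) F)
    (μ : Measure UnitAddCircle) [IsProbabilityMeasure μ]
    (hinv : ∀ g : G, Measure.map (ρ g) μ = μ) :
    (∃ p : UnitAddCircle, (Set.range fun g : G => ρ g p).Finite) ∧
      ∃ K : Subgroup G, K.Normal ∧ K.FiniteIndex ∧
        ∃ q : UnitAddCircle, ∀ k ∈ K, ρ k q = q := by
  set φ := rotationHom μ ρ hρ hinv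
  have : Finite φ.range := φ.finite_range_of_forall_monoidHom_real_eq_one hcoh
  obtain ⟨q, hq⟩ := Measure.nonempty_support (IsProbabilityMeasure.ne_zero μ)
  have hfix : ∀ k ∈ φ.ker, ρ k q = q := fun k hk => by
    obtain ⟨F, hF⟩ := hρ k
    exact UnitAddCircle.apply_eq_self_of_circleCDF_eq_zero hF (hinv k)
      (by simpa [φ, rotationHom] using hk) hq
  refine ⟨⟨q, φ.ker.finite_range_of_forall_mul_mem _ fun g k hk => ?_⟩,
    φ.ker, inferInstance, inferInstance, q, hfix⟩
  rw [map_mul, homeomorph_mul_apply, hfix k hk]
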